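/- arXiv:2101.07089 — 4 statements merged into one kernel-verified Lean document; each statement's English description precedes it below -/
import Mathlib

section
/- Let β, δ ∈ (0,1), λ > 0, K > 0 with λ·K ≥ 1. Suppose (g_n), (b_n) are nonnegative sequences with g_n + b_n = 1, g_0 = 1, and g_{n+1} > (1-δ)g_n + β b_n. Define S_n = (1/n)·Σ_{i=0}^{n-1} [g_i·((1-δ)·log λ − δ·log K) − b_i·log K]. Then for every n ≥ 1, S_n ≥ (β/(β+δ))·((1-δ)·log λ + (1-δ)·log K) − log K, which equals (β/(β+δ))·log( λ^{1-δ} / K^{δ + δ/β} ). -/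
theorem stmt_1 (β δ lam K : ℝ) (hβ : β ∈ Set.Ioo (0:ℝ) 1) (hδ : δ ∈ Set.Ioo (0:ℝ) 1)
    (hlam : 0 < lam) (hK : 0 < K) (hlamK : 1 ≤ lam * K)
    (g b : ℕ → ℝ) (hg : ∀ n, 0 ≤ g n) (hb : ∀ n, 0 ≤ b n)
    (hsum : ∀ n, g n + b n = 1) (hg0 : g 0 = 1)
    (hrec : ∀ n, g (n + 1) > (1 - δ) * g n + β * b n)
    (S : ℕ → ℝ)
    (hS : ∀ n, S n = (1 / n) * ∑ i ∈ Finset.range n,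
      (g i * ((1 - δ) * Real.log lam - δ * Real.log K) - b i * Real.log K)) :
    ∀ n ≥ 1,
      S n ≥ (β / (β + δ)) * ((1 - δ) * Real.log lam + (1 - δ) * Real.log K) - Real.log K ∧
      (β / (β + δ)) * ((1 - δ) * Real.log lam + (1 - δ) * Real.log K) - Real.log K =
        (β / (β + δ)) * Real.log (lam ^ (1 - δ) / K ^ (δ + δ / β)) := by
  obtain ⟨hβ0, hβ1⟩ := hβ
  obtain ⟨hδ0, hδ1⟩ := hδ
  set L := Real.log lam with hL
  set M := Real.log K with hM
  have hβδ : 0 < β + δ := by linarith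
  have hc : 0 ≤ (1 - δ) * (L + M) := by
    have : 0 ≤ Real.log (lam * K) := Real.log_nonneg hlamK
    rw [Real.log_mul (ne_of_gt hlam) (ne_of_gt hK)] at this
    nlinarith
  -- key sum bound
  have hT : ∀ n : ℕ, (β + δ) * ∑ i ∈ Finset.range n, g i ≥ n * β + 1 - g n := by
    intro n
    induction n with
    | zero => simp [hg0]
    | succ n ih =>
      rw [Finset.sum_range_succ]
      have hbn : b n = 1 - g n := by linarith [hsum n]
      have hr := hrec n
      rw [hbn] at hr
      push_cast
      nlinarith
  have hgle : ∀ n, g n ≤ 1 := fun n => by linarith [hsum n, hb n]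
  intro n hn
  have hn0 : (0:ℝ) < n := by exact_mod_cast hn
  constructor
  · -- rewrite S n
    have hterm : ∀ i ∈ Finset.range n,
        g i * ((1 - δ) * L - δ * M) - b i * M = g i * ((1 - δ) * (L + M)) - M := by
      intro i _
      have : b i = 1 - g i := by linarith [hsum i]
      rw [this]; ring
    have hSn : S n = ((1 - δ) * (L + M)) * (∑ i ∈ Finset.range n, g i) / n - M := by
      rw [hS n, Finset.sum_congr rfl hterm, Finset.sum_sub_distrib,
        ← Finset.sum_mul, Finset.sum_const, Finset.card_range]
      field_simp
      ring
    rw [hSn]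
    have hTn : (∑ i ∈ Finset.range n, g i) / n ≥ β / (β + δ) := by
      rw [ge_iff_le, div_le_div_iff₀ hβδ hn0]
      have := hT n
      nlinarith [hgle n]
    have : ((1 - δ) * (L + M)) * ((∑ i ∈ Finset.range n, g i) / n)
        ≥ ((1 - δ) * (L + M)) * (β / (β + δ)) := by
      exact mul_le_mul_of_nonneg_left hTn hc
    calc ((1 - δ) * (L + M)) * (∑ i ∈ Finset.range n, g i) / n - M
        = ((1 - δ) * (L + M)) * ((∑ i ∈ Finset.range n, g i) / n) - M := by ring
      _ ≥ ((1 - δ) * (L + M)) * (β / (β + δ)) - M := by linarith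
      _ = β / (β + δ) * ((1 - δ) * L + (1 - δ) * M) - M := by ring
  · have hlog : Real.log (lam ^ (1 - δ) / K ^ (δ + δ / β))
        = (1 - δ) * L - (δ + δ / β) * M := by
      rw [Real.log_div (ne_of_gt (Real.rpow_pos_of_pos hlam _))
        (ne_of_gt (Real.rpow_pos_of_pos hK _)),
        Real.log_rpow hlam, Real.log_rpow hK]
    rw [hlog]
    field_simp
    ring
end

section
/- Let E be a 2-dimensional inner product space and let T : E → E be an invertible linear map. Then the induced map on the projective space P(E) (equipped with the angle metric d([v],[w]) = angle between the lines spanned by v and w) is Lipschitz with Lipschitz constant at most ‖T‖·‖T⁻¹‖. -/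
/-!
Write `K = ‖T‖ ‖T⁻¹‖`. Since `sin (angle x y) * ‖y‖` is the distance from `y` to the line `ℝ x`,
`T` distorts the sine of the angle between two lines by at most the factor `K`, so the images of
two lines at angle `θ` lie at angle at most `arcsin (K sin θ)`, which is `K θ` to first order.
Bisecting the arc between them `n` times and using the triangle inequality for the angle between
lines gives the bound `2ⁿ arcsin (K sin (θ / 2ⁿ))`, which tends to `K θ`.
-/

open Real InnerProductGeometry RealInnerProductSpace Filter Topology

theorem le_mul_of_forall_le_two_pow_mul {g : ℝ → ℝ} {K θ p : ℝ} (hg : HasDerivAt g K 0)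
    (hg0 : g 0 = 0) (h : ∀ n : ℕ, p ≤ 2 ^ n * g (θ / 2 ^ n)) : p ≤ K * θ := by
  rcases eq_or_ne θ 0 with rfl | hθ
  · simpa [hg0] using h 0
  have hstep : Tendsto (fun n : ℕ => θ / 2 ^ n) atTop (𝓝[≠] 0) := by
    refine tendsto_nhdsWithin_iff.mpr ⟨?_, .of_forall fun n => by simp [hθ]⟩
    exact tendsto_const_nhds.div_atTop (tendsto_pow_atTop_atTop_of_one_lt one_lt_two)
  have hlim : Tendsto (fun n : ℕ => 2 ^ n * g (θ / 2 ^ n)) atTop (𝓝 (θ * K)) := by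
    refine ((hg.tendsto_slope_zero.comp hstep).const_mul θ).congr fun n => ?_
    simp only [Function.comp_apply, zero_add, hg0, sub_zero, smul_eq_mul]
    field_simp
  rw [mul_comm]
  exact ge_of_tendsto' hlim h

namespace InnerProductGeometry

variable {V : Type*} [NormedAddCommGroup V] [InnerProductSpace ℝ V]

theorem sin_angle_sub_smul_mul_norm_mul_norm (x y : V) (c : ℝ) :
    sin (angle x (y - c • x)) * (‖x‖ * ‖y - c • x‖) = sin (angle x y) * (‖x‖ * ‖y‖) := by
  rw [sin_angle_mul_norm_mul_norm, sin_angle_mul_norm_mul_norm]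
  congr 1
  simp only [inner_sub_left, inner_sub_right, real_inner_smul_left, real_inner_smul_right,
    real_inner_comm x y]
  ring

/-- The angle distance between the lines `ℝ x` and `ℝ y` in the projective space `P(V)`. -/
noncomputable def lineAngle (x y : V) : ℝ := min (angle x y) (angle x (-y))

theorem lineAngle_eq_arcsin_sin (x y : V) : lineAngle x y = arcsin (sin (angle x y)) := by
  have h0 := angle_nonneg x y
  have hπ := angle_le_pi x y
  rw [lineAngle, angle_neg_right]
  rcases le_total (angle x y) (π / 2) with h | h
  · rw [min_eq_left (by linarith), arcsin_sin (by linarith [pi_pos]) h]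
  · rw [min_eq_right (by linarith), ← sin_pi_sub, arcsin_sin (by linarith) (by linarith)]

theorem lineAngle_neg_left (x y : V) : lineAngle (-x) y = lineAngle x y := by
  rw [lineAngle_eq_arcsin_sin, lineAngle_eq_arcsin_sin, angle_neg_left, sin_pi_sub]

theorem lineAngle_neg_right (x y : V) : lineAngle x (-y) = lineAngle x y := by
  rw [lineAngle_eq_arcsin_sin, lineAngle_eq_arcsin_sin, angle_neg_right, sin_pi_sub]

theorem lineAngle_le_angle_add_lineAngle (x y z : V) :
    lineAngle x z ≤ angle x y + lineAngle y z := by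
  rcases min_choice (angle y z) (angle y (-z)) with h | h
  · rw [show lineAngle y z = angle y z from h]
    exact (min_le_left _ _).trans (angle_le_angle_add_angle x y z)
  · rw [show lineAngle y z = angle y (-z) from h]
    exact (min_le_right _ _).trans (angle_le_angle_add_angle x y (-z))

theorem lineAngle_le_lineAngle_add_lineAngle (x y z : V) :
    lineAngle x z ≤ lineAngle x y + lineAngle y z := by
  rcases min_choice (angle x y) (angle x (-y)) with h | h
  · rw [show lineAngle x y = angle x y from h]
    exact lineAngle_le_angle_add_lineAngle x y z
  · rw [show lineAngle x y = angle x (-y) from h, ← lineAngle_neg_left y z]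
    exact lineAngle_le_angle_add_lineAngle x (-y) z

theorem angle_add_eq_of_norm_eq {x y : V} (h : ‖x‖ = ‖y‖) : angle x (x + y) = angle y (x + y) := by
  have : ⟪x, x + y⟫ = ⟪y, x + y⟫ := by
    rw [inner_add_right, inner_add_right, real_inner_self_eq_norm_sq, real_inner_self_eq_norm_sq,
      h, real_inner_comm, add_comm]
  rw [angle, angle, this, h]

theorem exists_angle_eq_half {v w : V} (hv : v ≠ 0) (hw : w ≠ 0) (hvw : angle v w < π) :
    ∃ m ≠ 0, angle v m = angle v w / 2 ∧ angle m w = angle v w / 2 := by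
  have hv' : 0 < ‖v‖ := norm_pos_iff.2 hv
  have hw' : 0 < ‖w‖ := norm_pos_iff.2 hw
  set a := ‖w‖ • v
  set b := ‖v‖ • w
  have hsplit : angle a b = angle a (a + b) + angle b (a + b) :=
    angle_eq_angle_add_add_angle_add a (smul_ne_zero hv'.ne' hw)
  have hsym : angle a (a + b) = angle b (a + b) :=
    angle_add_eq_of_norm_eq (by simp only [a, b, norm_smul, norm_norm, mul_comm])
  have hab : angle v w = angle a b := by
    rw [angle_smul_left_of_pos _ _ hw', angle_smul_right_of_pos _ _ hv']
  have hleft : angle v (a + b) = angle v w / 2 := by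
    rw [← angle_smul_left_of_pos v (a + b) hw']
    linarith
  have hright : angle (a + b) w = angle v w / 2 := by
    rw [angle_comm, ← angle_smul_left_of_pos w (a + b) hv']
    linarith
  refine ⟨a + b, fun h0 => ?_, hleft, hright⟩
  rw [h0, angle_zero_right] at hleft
  linarith

theorem le_two_pow_mul_of_bisect {d : V → V → ℝ} {g : ℝ → ℝ}
    (hd : ∀ u v w, d u w ≤ d u v + d v w)
    (hloc : ∀ v w, v ≠ 0 → w ≠ 0 → d v w ≤ g (angle v w)) (n : ℕ) :
    ∀ v w, v ≠ 0 → w ≠ 0 → angle v w < π → d v w ≤ 2 ^ n * g (angle v w / 2 ^ n) := by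
  induction n with
  | zero =>
    intro v w hv hw _
    simpa using hloc v w hv hw
  | succ n ih =>
    intro v w hv hw hvw
    obtain ⟨m, hm, hvm, hmw⟩ := exists_angle_eq_half hv hw hvw
    have hhalf : angle v w / 2 < π := by linarith [angle_nonneg v w]
    calc d v w ≤ d v m + d m w := hd v m w
      _ ≤ 2 ^ n * g (angle v w / 2 / 2 ^ n) + 2 ^ n * g (angle v w / 2 / 2 ^ n) := by
        gcongr
        · simpa only [hvm] using ih v m hv hm (hvm ▸ hhalf)
        · simpa only [hmw] using ih m w hm hw (hmw ▸ hhalf)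
      _ = 2 ^ (n + 1) * g (angle v w / 2 ^ (n + 1)) := by rw [pow_succ', div_div]; ring

end InnerProductGeometry

namespace ContinuousLinearEquiv

variable {E F : Type*} [NormedAddCommGroup E] [InnerProductSpace ℝ E]
  [NormedAddCommGroup F] [InnerProductSpace ℝ F]

theorem sin_angle_map_le (T : E ≃L[ℝ] F) {v w : E} (hv : v ≠ 0) (hw : w ≠ 0) :
    sin (angle (T v) (T w)) ≤ ‖(T : E →L[ℝ] F)‖ * ‖(T.symm : F →L[ℝ] E)‖ * sin (angle v w) := by
  set c := ⟪v, w⟫ / ⟪v, v⟫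
  set u := w - c • v
  have hTv : 0 < ‖T v‖ := norm_pos_iff.2 (T.map_ne_zero_iff.2 hv)
  have hTw : 0 < ‖T w‖ := norm_pos_iff.2 (T.map_ne_zero_iff.2 hw)
  have hu : ⟪v, u⟫ = 0 := by
    have : ⟪v, v⟫ ≠ 0 := inner_self_ne_zero.2 hv
    simp only [u, c, inner_sub_right, real_inner_smul_right]
    field_simp
    ring
  have hnorm_u : ‖u‖ = sin (angle v w) * ‖w‖ := by
    have h := sin_angle_sub_smul_mul_norm_mul_norm v w c
    rw [(inner_eq_zero_iff_angle_eq_pi_div_two v u).1 hu, sin_pi_div_two] at h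
    exact mul_left_cancel₀ (norm_ne_zero_iff.2 hv) (by linear_combination h)
  have hTu : sin (angle (T v) (T w)) * (‖T v‖ * ‖T w‖) ≤ ‖T v‖ * ‖T u‖ := by
    rw [← sin_angle_sub_smul_mul_norm_mul_norm (T v) (T w) c, ← map_smul, ← map_sub]
    exact mul_le_of_le_one_left (by positivity) (sin_le_one _)
  have hT : ‖T u‖ ≤ ‖(T : E →L[ℝ] F)‖ * ‖u‖ := (T : E →L[ℝ] F).le_opNorm u
  have hTsymm : ‖w‖ ≤ ‖(T.symm : F →L[ℝ] E)‖ * ‖T w‖ := by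
    simpa using (T.symm : F →L[ℝ] E).le_opNorm (T w)
  refine le_of_mul_le_mul_right (hTu.trans ?_) (mul_pos hTv hTw)
  have hsin := sin_angle_nonneg v w
  calc ‖T v‖ * ‖T u‖ ≤ ‖T v‖ * (‖(T : E →L[ℝ] F)‖ * ‖u‖) := by gcongr
    _ ≤ ‖T v‖ * (‖(T : E →L[ℝ] F)‖ * (sin (angle v w) * (‖(T.symm : F →L[ℝ] E)‖ * ‖T w‖))) := by
        rw [hnorm_u]
        gcongr
    _ = _ := by ring

theorem lineAngle_map_le_arcsin (T : E ≃L[ℝ] F) {v w : E} (hv : v ≠ 0) (hw : w ≠ 0) :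
    lineAngle (T v) (T w) ≤
      arcsin (‖(T : E →L[ℝ] F)‖ * ‖(T.symm : F →L[ℝ] E)‖ * sin (angle v w)) := by
  rw [lineAngle_eq_arcsin_sin]
  exact monotone_arcsin (T.sin_angle_map_le hv hw)

theorem lineAngle_map_le (T : E ≃L[ℝ] F) {v w : E} (hv : v ≠ 0) (hw : w ≠ 0) :
    lineAngle (T v) (T w) ≤ ‖(T : E →L[ℝ] F)‖ * ‖(T.symm : F →L[ℝ] E)‖ * lineAngle v w := by
  wlog h : lineAngle v w = angle v w generalizing w
  · have h' : lineAngle v (-w) = angle v (-w) := by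
      rw [lineAngle_neg_right]
      exact (min_choice _ _).resolve_left h
    simpa only [lineAngle_neg_right, map_neg] using this (neg_ne_zero.2 hw) h'
  set K := ‖(T : E →L[ℝ] F)‖ * ‖(T.symm : F →L[ℝ] E)‖
  have hlt : angle v w < π := by
    have : angle v w ≤ angle v (-w) := h ▸ min_le_right _ _
    linarith [angle_neg_right v w, pi_pos]
  have hderiv : HasDerivAt (fun x => arcsin (K * sin x)) K 0 :=
    ((hasDerivAt_arcsin (by simp) (by simp)).comp 0 ((hasDerivAt_sin 0).const_mul K)).congr_deriv
      (by simp)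
  rw [h]
  refine le_mul_of_forall_le_two_pow_mul hderiv (by simp) fun n => ?_
  exact le_two_pow_mul_of_bisect (d := fun v w => lineAngle (T v) (T w))
    (g := fun x => arcsin (K * sin x))
    (fun _ _ _ => lineAngle_le_lineAngle_add_lineAngle _ _ _)
    (fun _ _ => T.lineAngle_map_le_arcsin) n v w hv hw hlt

end ContinuousLinearEquiv

theorem stmt_9_general {E : Type*} [NormedAddCommGroup E] [InnerProductSpace ℝ E]
    (T : E ≃L[ℝ] E) :
    ∀ v w : E, v ≠ 0 → w ≠ 0 →
      min (InnerProductGeometry.angle (T v) (T w))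
          (InnerProductGeometry.angle (T v) (-(T w))) ≤
        ‖(T : E →L[ℝ] E)‖ * ‖(T.symm : E →L[ℝ] E)‖ *
          min (InnerProductGeometry.angle v w) (InnerProductGeometry.angle v (-w)) :=
  fun _ _ hv hw => T.lineAngle_map_le hv hw

theorem stmt_9 {E : Type*} [NormedAddCommGroup E] [InnerProductSpace ℝ E]
    (hdim : Module.finrank ℝ E = 2) (T : E ≃L[ℝ] E) :
    ∀ v w : E, v ≠ 0 → w ≠ 0 →
      min (InnerProductGeometry.angle (T v) (T w))
          (InnerProductGeometry.angle (T v) (-(T w))) ≤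
        ‖(T : E →L[ℝ] E)‖ * ‖(T.symm : E →L[ℝ] E)‖ *
          min (InnerProductGeometry.angle v w) (InnerProductGeometry.angle v (-w)) :=
  stmt_9_general T
end

section
/- Let (M, d) be a metric space with a Borel probability measure on each atom, and let f be a map expanding on atoms of a partition with factor 𝚍 > 1 (i.e. d(fm, fm') ≥ 𝚍·d(m,m') for m, m' in the same atom). Let (f, A) be a cocycle such that the projectivized cocycle ℙ(A) is (C, θ)-Hölder in the base point and each fiber map ℙ(A)(m) is Lipschitz with constant b(A). If X : P → ℙE is (C_X, θ)-Hölder with C_X ≤ C₀ := C/((1 − b(A)/𝚍^θ)·𝚍^θ) and b(A)/𝚍^θ < 1, then the pushed-forward vector field Y(m) = ℙ(A)(g(m))·X(g(m)), where g is the inverse branch of f, is (C₀, θ)-Hölder. -/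
theorem stmt_10 {M F : Type*} [MetricSpace M] [MetricSpace F]
    (f g : M → M) (PA : M → F → F) (P Q : Set M)
    (ed C bA θ CX : ℝ) (hed : 1 < ed) (hθ : 0 < θ) (hθ1 : θ ≤ 1)
    (hC : 0 < C) (hbA : 0 ≤ bA) (hq : bA / ed ^ θ < 1)
    (hinv : ∀ m ∈ Q, f (g m) = m)
    (hgP : ∀ m ∈ Q, g m ∈ P)
    (hcontr : ∀ m ∈ Q, ∀ m' ∈ Q, dist (g m) (g m') ≤ dist m m' / ed)
    (hHolder : ∀ m m' : M, ∀ v : F, dist (PA m v) (PA m' v) ≤ C * dist m m' ^ θ)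
    (hLip : ∀ m : M, ∀ v w : F, dist (PA m v) (PA m w) ≤ bA * dist v w)
    (X : M → F)
    (hX : ∀ m ∈ P, ∀ m' ∈ P, dist (X m) (X m') ≤ CX * dist m m' ^ θ)
    (hCX : CX ≤ C / ((1 - bA / ed ^ θ) * ed ^ θ)) :
    ∀ m ∈ Q, ∀ m' ∈ Q,
      dist (PA (g m) (X (g m))) (PA (g m') (X (g m'))) ≤
        (C / ((1 - bA / ed ^ θ) * ed ^ θ)) * dist m m' ^ θ := by
  intro m hm m' hm'
  have hed0 : (0:ℝ) < ed := lt_trans one_pos hed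
  have hedθ : (0:ℝ) < ed ^ θ := Real.rpow_pos_of_pos hed0 θ
  have h1q : 0 < 1 - bA / ed ^ θ := by linarith
  set C₀ := C / ((1 - bA / ed ^ θ) * ed ^ θ) with hC₀def
  have hC₀pos : 0 < C₀ := div_pos hC (mul_pos h1q hedθ)
  have hne : ed ^ θ - bA ≠ 0 := by
    have : bA < ed ^ θ := by
      have := (div_lt_one hedθ).mp hq
      linarith
    linarith
  have hkey : C = C₀ * (ed ^ θ - bA) := by
    rw [hC₀def]
    field_simp [hne]
  -- bound on distance of pulled-back points
  have hd : dist (g m) (g m') ^ θ ≤ dist m m' ^ θ / ed ^ θ := by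
    have h1 : dist (g m) (g m') ^ θ ≤ (dist m m' / ed) ^ θ :=
      Real.rpow_le_rpow dist_nonneg (hcontr m hm m' hm') hθ.le
    rwa [Real.div_rpow dist_nonneg hed0.le] at h1
  have hDθ : 0 ≤ dist m m' ^ θ := Real.rpow_nonneg dist_nonneg θ
  have h1 : dist (PA (g m) (X (g m))) (PA (g m') (X (g m))) ≤
      C * (dist m m' ^ θ / ed ^ θ) :=
    (hHolder _ _ _).trans (mul_le_mul_of_nonneg_left hd hC.le)
  have hXb : dist (X (g m)) (X (g m')) ≤ C₀ * (dist m m' ^ θ / ed ^ θ) := by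
    rcases le_or_gt 0 CX with h | h
    · calc dist (X (g m)) (X (g m'))
          ≤ CX * dist (g m) (g m') ^ θ := hX _ (hgP m hm) _ (hgP m' hm')
        _ ≤ CX * (dist m m' ^ θ / ed ^ θ) := mul_le_mul_of_nonneg_left hd h
        _ ≤ C₀ * (dist m m' ^ θ / ed ^ θ) :=
            mul_le_mul_of_nonneg_right hCX (div_nonneg hDθ hedθ.le)
    · have h0 : dist (X (g m)) (X (g m')) ≤ 0 := by
        have := hX _ (hgP m hm) _ (hgP m' hm')
        nlinarith [Real.rpow_nonneg (dist_nonneg (x := g m) (y := g m')) θ]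
      have : (0:ℝ) ≤ C₀ * (dist m m' ^ θ / ed ^ θ) :=
        mul_nonneg hC₀pos.le (div_nonneg hDθ hedθ.le)
      linarith
  have h2 : dist (PA (g m') (X (g m))) (PA (g m') (X (g m'))) ≤
      bA * (C₀ * (dist m m' ^ θ / ed ^ θ)) :=
    (hLip _ _ _).trans (mul_le_mul_of_nonneg_left hXb hbA)
  have htri := dist_triangle (PA (g m) (X (g m))) (PA (g m') (X (g m)))
    (PA (g m') (X (g m')))
  have heq : C * (dist m m' ^ θ / ed ^ θ) + bA * (C₀ * (dist m m' ^ θ / ed ^ θ))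
      = C₀ * dist m m' ^ θ := by
    rw [hkey]
    field_simp
    ring
  linarith
end

section
/- Let L be a hyperbolic linear automorphism of ℝ³ with eigenvalues λ_u > 1 > λ_ws > λ_ss > 0 and unit eigenvectors v_u, v_ws, v_ss, with stable plane E^s = span(v_ws, v_ss). Suppose Df is a linear map with Df(v_u) = v_u + w for some w ∈ E^s with ‖w‖ ≤ Ct, and Df preserves E^s with ‖Df|_{E^s}‖ ≤ Ct, where C, t > 0. Then for γ satisfying 2Ct·(λ_ws^n/λ_u^n)·(1+γ)/γ ≤ 1 and γ < 1, the cone C^u_γ = {s(v_u + w_s) : s ∈ ℝ, w_s ∈ E^s, ‖w_s‖ < γ} is mapped into itself by Lⁿ∘Df; that is, (Lⁿ∘Df)(C^u_γ) ⊆ C^u_γ. -/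
theorem stmt_11 (lu lws lss C t γ : ℝ) (n : ℕ)
    (hlu : 1 < lu) (hlws : lws < 1) (hord : lss < lws) (hlss : 0 < lss)
    (v_u v_ws v_ss w : EuclideanSpace ℝ (Fin 3))
    (L Df : EuclideanSpace ℝ (Fin 3) →ₗ[ℝ] EuclideanSpace ℝ (Fin 3))
    (Es : Submodule ℝ (EuclideanSpace ℝ (Fin 3)))
    (hEs : Es = Submodule.span ℝ {v_ws, v_ss})
    (hLu : L v_u = lu • v_u) (hLws : L v_ws = lws • v_ws) (hLss : L v_ss = lss • v_ss)
    (hLEs : ∀ u ∈ Es, L u ∈ Es)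
    (hLcontr : ∀ u ∈ Es, ‖L u‖ ≤ lws * ‖u‖)
    (hC : 0 < C) (ht : 0 < t)
    (hw : w ∈ Es) (hwn : ‖w‖ ≤ C * t)
    (hDfu : Df v_u = v_u + w)
    (hDfEs : ∀ u ∈ Es, Df u ∈ Es)
    (hDfn : ∀ u ∈ Es, ‖Df u‖ ≤ C * t * ‖u‖)
    (hγ0 : 0 < γ) (hγ1 : γ < 1)
    (hcond : 2 * C * t * (lws ^ n / lu ^ n) * ((1 + γ) / γ) ≤ 1) :
    Set.MapsTo (fun x => (L ^ n) (Df x))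
      {x | ∃ s : ℝ, ∃ ws ∈ Es, ‖ws‖ < γ ∧ x = s • (v_u + ws)}
      {x | ∃ s : ℝ, ∃ ws ∈ Es, ‖ws‖ < γ ∧ x = s • (v_u + ws)} := by
  have hlws0 : 0 < lws := lt_trans hlss hord
  have hlu0 : (0:ℝ) < lu ^ n := pow_pos (lt_trans one_pos hlu) n
  -- iterated facts
  have hLnu : ∀ m : ℕ, (L ^ m) v_u = lu ^ m • v_u := by
    intro m
    induction m with
    | zero => simp
    | succ k ih =>
      rw [pow_succ, Module.End.mul_apply, hLu, map_smul, ih, smul_smul, pow_succ]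
      ring_nf
  have hLnEs : ∀ m : ℕ, ∀ u ∈ Es, (L ^ m) u ∈ Es := by
    intro m
    induction m with
    | zero => intro u hu; simpa using hu
    | succ k ih =>
      intro u hu
      rw [pow_succ, Module.End.mul_apply]
      exact ih _ (hLEs u hu)
  have hLncontr : ∀ m : ℕ, ∀ u ∈ Es, ‖(L ^ m) u‖ ≤ lws ^ m * ‖u‖ := by
    intro m
    induction m with
    | zero => intro u hu; simp
    | succ k ih =>
      intro u hu
      rw [pow_succ, Module.End.mul_apply]
      calc ‖(L ^ k) (L u)‖ ≤ lws ^ k * ‖L u‖ := ih _ (hLEs u hu)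
        _ ≤ lws ^ k * (lws * ‖u‖) := by
            exact mul_le_mul_of_nonneg_left (hLcontr u hu) (le_of_lt (pow_pos hlws0 k))
        _ = lws ^ (k + 1) * ‖u‖ := by ring
  rintro x ⟨s, ws, hws, hwsn, rfl⟩
  -- stable part after Df and L^n
  set z : EuclideanSpace ℝ (Fin 3) := (L ^ n) (w + Df ws) with hz
  have hzEs : z ∈ Es := hLnEs n _ (Es.add_mem hw (hDfEs ws hws))
  have hzn : ‖z‖ < lws ^ n * (C * t * (1 + γ)) := by
    have h1 : ‖w + Df ws‖ ≤ C * t + C * t * ‖ws‖ :=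
      le_trans (norm_add_le _ _) (add_le_add hwn (hDfn ws hws))
    have h2 : C * t + C * t * ‖ws‖ < C * t * (1 + γ) := by
      have := mul_lt_mul_of_pos_left hwsn (mul_pos hC ht)
      nlinarith
    calc ‖z‖ ≤ lws ^ n * ‖w + Df ws‖ := hLncontr n _ (Es.add_mem hw (hDfEs ws hws))
      _ < lws ^ n * (C * t * (1 + γ)) := by
          have := lt_of_le_of_lt h1 h2
          exact mul_lt_mul_of_pos_left this (pow_pos hlws0 n)
  refine ⟨s * lu ^ n, (lu ^ n)⁻¹ • z, Es.smul_mem _ hzEs, ?_, ?_⟩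
  · have hbound : lws ^ n / lu ^ n * (C * t * (1 + γ)) ≤ γ / 2 := by
      have h := mul_le_mul_of_nonneg_right hcond (by positivity : (0:ℝ) ≤ γ / 2)
      have he : 2 * C * t * (lws ^ n / lu ^ n) * ((1 + γ) / γ) * (γ / 2)
          = lws ^ n / lu ^ n * (C * t * (1 + γ)) := by
        field_simp
      rw [he] at h
      linarith
    have : ‖(lu ^ n)⁻¹ • z‖ = (lu ^ n)⁻¹ * ‖z‖ := by
      rw [norm_smul, Real.norm_eq_abs, abs_of_pos (inv_pos.mpr hlu0)]
    rw [this]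
    have h3 : (lu ^ n)⁻¹ * ‖z‖ < (lu ^ n)⁻¹ * (lws ^ n * (C * t * (1 + γ))) :=
      mul_lt_mul_of_pos_left hzn (inv_pos.mpr hlu0)
    have h4 : (lu ^ n)⁻¹ * (lws ^ n * (C * t * (1 + γ))) = lws ^ n / lu ^ n * (C * t * (1 + γ)) := by
      ring
    calc (lu ^ n)⁻¹ * ‖z‖ < lws ^ n / lu ^ n * (C * t * (1 + γ)) := by rw [← h4]; exact h3
      _ ≤ γ / 2 := hbound
      _ < γ := by linarith
  · simp only [map_smul, map_add, hDfu, hLnu n]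
    rw [hz, map_add]
    have hcancel : (s * lu ^ n) • ((lu ^ n)⁻¹ • ((L ^ n) w + (L ^ n) (Df ws)))
        = s • ((L ^ n) w + (L ^ n) (Df ws)) := by
      rw [smul_smul, mul_assoc, mul_inv_cancel₀ (ne_of_gt hlu0), mul_one]
    rw [eq_comm, smul_add, hcancel]
    module
end
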